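/- Let G : ℝ^{|D|} → ℝ_{>0} and define f_2(a|x) = (∏_d x(a_d))·G((u_x(a_d)/u_x)_d). Then f_2 satisfies trait combination (∏_d x(a_d) > 0 implies f_2(a|x) > 0) and trait growth inertia: if x(a_d) = 0 and the directional derivative of f_2(a_d,a_{-d}|·) at x in direction e_{a'} is nonzero, then ∏_{d'≠d} x(a_{d'}) > 0 and a'_d = a_d; moreover in that case the derivative in direction e_{(a_d,a'_{-d})} equals (∏_{d'≠d} x(a_{d'}))·G(u_x(a_d,a'_{-d})/u_x, (u_x(a_{d'})/u_x)_{d'≠d}). -/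

import Mathlib

open Finset

noncomputable section

variable {D : Type*} [Fintype D] [DecidableEq D] {A : D → Type*}
  [∀ d, Fintype (A d)] [∀ d, DecidableEq (A d)]

/-- payoff of type `a` at state `x`: `u_x(a) = ∑ a', x(a') u(a,a')`. -/
def typePay (u : (∀ d, A d) → (∀ d, A d) → ℝ) (x : (∀ d, A d) → ℝ) (a : ∀ d, A d) : ℝ :=
  ∑ a', x a' * u a a'

/-- mean payoff `u_x`. -/
def meanPay (u : (∀ d, A d) → (∀ d, A d) → ℝ) (x : (∀ d, A d) → ℝ) : ℝ :=
  ∑ a, x a * typePay u x a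

/-- marginal frequency `x(a_d)` of trait `t` in dimension `d`. -/
def marg (x : (∀ d, A d) → ℝ) (d : D) (t : A d) : ℝ :=
  ∑ a, if a d = t then x a else 0

/-- marginal trait payoff `u_x(a_d)` (0 by div-by-zero convention when `x(a_d)=0`). -/
def traitPay (u : (∀ d, A d) → (∀ d, A d) → ℝ) (x : (∀ d, A d) → ℝ) (d : D) (t : A d) : ℝ :=
  (∑ a, if a d = t then x a * typePay u x a else 0) / marg x d t

/-- the recombinator vector field `ẋ(a)` with recombination rate `r`. -/
def recomb (u : (∀ d, A d) → (∀ d, A d) → ℝ) (x : (∀ d, A d) → ℝ) (r : ℝ) (a : ∀ d, A d) : ℝ :=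
  (1 - r) * x a * typePay u x a / meanPay u x
    + r * ∏ d, (marg x d (a d) * traitPay u x d (a d) / meanPay u x)
    - x a

/-- the trait-to-type ratio `m_x(a)`. -/
def ttRatio (x : (∀ d, A d) → ℝ) (a : ∀ d, A d) : ℝ :=
  (∏ d, marg x d (a d)) / x a

/-- the `r`-payoff `z^r_x(a)`. -/
def rPay (u : (∀ d, A d) → (∀ d, A d) → ℝ) (x : (∀ d, A d) → ℝ) (r : ℝ) (a : ∀ d, A d) : ℝ :=
  (1 - r) * typePay u x a / meanPay u x
    + r * ttRatio x a * ∏ d, (traitPay u x d (a d) / meanPay u x)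

/-- trait-imitation component `f₂(a|x) = (∏_d x(a_d))·G((u_x(a_d)/u_x)_d)`. -/
def traitImit (G : (D → ℝ) → ℝ) (u : (∀ d, A d) → (∀ d, A d) → ℝ)
    (x : (∀ d, A d) → ℝ) (a : ∀ d, A d) : ℝ :=
  (∏ d, marg x d (a d)) * G (fun d => traitPay u x d (a d) / meanPay u x)


section helpers

variable (u : (∀ d, A d) → (∀ d, A d) → ℝ) (x : (∀ d, A d) → ℝ) (b : ∀ d, A d) (s : ℝ)

lemma marg_nonneg (hx : ∀ a, 0 ≤ x a) (d : D) (t : A d) : 0 ≤ marg x d t := by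
  unfold marg
  exact Finset.sum_nonneg fun a _ => by split <;> simp [hx a]

lemma fiber_zero (hx : ∀ a, 0 ≤ x a) {d : D} {t : A d} (hm : marg x d t = 0)
    {a : ∀ d, A d} (ha : a d = t) : x a = 0 := by
  have := (Finset.sum_eq_zero_iff_of_nonneg (fun a _ => by split <;> simp [hx a])).mp hm a
    (Finset.mem_univ a)
  simpa [ha] using this

lemma marg_add (d : D) (t : A d) :
    marg (x + s • (Pi.single b 1 : (∀ d, A d) → ℝ)) d t
      = marg x d t + s * (if b d = t then 1 else 0) := by
  unfold marg
  simp only [Pi.add_apply, Pi.smul_apply, Pi.single_apply, smul_eq_mul]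
  have : ∀ a : ∀ d, A d, (if a d = t then x a + s * (if a = b then 1 else 0) else 0)
      = (if a d = t then x a else 0) + (if a = b then (if b d = t then s else 0) else 0) := by
    intro a
    rcases eq_or_ne a b with rfl | h <;> by_cases hdt : a d = t <;> simp_all
  rw [Finset.sum_congr rfl fun a _ => this a, Finset.sum_add_distrib,
    Finset.sum_ite_eq' Finset.univ b (fun _ => if b d = t then s else 0)]
  simp [mul_ite]

lemma typePay_add (a : ∀ d, A d) :
    typePay u (x + s • (Pi.single b 1 : (∀ d, A d) → ℝ)) a = typePay u x a + s * u a b := by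
  unfold typePay
  simp only [Pi.add_apply, Pi.smul_apply, Pi.single_apply, smul_eq_mul]
  have : ∀ a' : ∀ d, A d, (x a' + s * (if a' = b then 1 else 0)) * u a a'
      = x a' * u a a' + (if a' = b then s * u a b else 0) := by
    intro a'
    rcases eq_or_ne a' b with rfl | h
    · simp [add_mul, mul_assoc]
    · simp [h, add_mul]
  rw [Finset.sum_congr rfl fun a' _ => this a', Finset.sum_add_distrib,
    Finset.sum_ite_eq' Finset.univ b (fun _ => s * u _ b)]
  simp

lemma num_zero (hx : ∀ a, 0 ≤ x a) {d : D} {t : A d} (hm : marg x d t = 0) :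
    (∑ a', if a' d = t then (x + s • (Pi.single b 1 : (∀ d, A d) → ℝ)) a'
        * typePay u (x + s • (Pi.single b 1 : (∀ d, A d) → ℝ)) a' else 0)
      = if b d = t then s * typePay u (x + s • (Pi.single b 1 : (∀ d, A d) → ℝ)) b else 0 := by
  set y := x + s • (Pi.single b 1 : (∀ d, A d) → ℝ) with hy
  have key : ∀ a' : ∀ d, A d, (if a' d = t then y a' * typePay u y a' else 0)
      = (if a' = b then (if b d = t then s * typePay u y b else 0) else 0) := by
    intro a'
    rcases eq_or_ne a' b with rfl | h
    · by_cases hdt : a' d = t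
      · have : x a' = 0 := fiber_zero x hx hm hdt
        simp [hy, hdt, Pi.single_apply, this]
      · simp [hdt]
    · by_cases hdt : a' d = t
      · have : x a' = 0 := fiber_zero x hx hm hdt
        simp [hy, hdt, h, Pi.single_apply, this]
      · simp [hdt, h]
  rw [Finset.sum_congr rfl fun a' _ => key a',
    Finset.sum_ite_eq' Finset.univ b (fun _ => if b d = t then s * typePay u y b else 0)]
  simp

lemma traitPay_zero_fiber (hx : ∀ a, 0 ≤ x a) {d : D} {t : A d} (hm : marg x d t = 0)
    (hbd : b d = t) (hs : s ≠ 0) :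
    traitPay u (x + s • (Pi.single b 1 : (∀ d, A d) → ℝ)) d t
      = typePay u (x + s • (Pi.single b 1 : (∀ d, A d) → ℝ)) b := by
  unfold traitPay
  rw [num_zero u x b s hx hm, marg_add, hm, if_pos hbd, if_pos hbd]
  simp only [zero_add, mul_one]
  exact mul_div_cancel_left₀ _ hs

lemma meanPay_pos (hu : ∀ a a', 0 < u a a') (hx : ∀ a, 0 ≤ x a) (hsum : ∑ a, x a = 1) :
    0 < meanPay u x := by
  obtain ⟨a₀, -, ha₀⟩ : ∃ a₀ ∈ Finset.univ, 0 < x a₀ := by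
    by_contra h
    push_neg at h
    have : ∑ a, x a = 0 := Finset.sum_eq_zero fun a _ => le_antisymm (h a (Finset.mem_univ a)) (hx a)
    simp [this] at hsum
  have htp : ∀ a, 0 < typePay u x a := fun a =>
    Finset.sum_pos' (fun a' _ => mul_nonneg (hx a') (hu a a').le)
      ⟨a₀, Finset.mem_univ a₀, mul_pos ha₀ (hu a a₀)⟩
  exact Finset.sum_pos' (fun a _ => mul_nonneg (hx a) (htp a).le)
    ⟨a₀, Finset.mem_univ a₀, mul_pos ha₀ (htp a₀)⟩

lemma cont_typePay (a : ∀ d, A d) :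
    Continuous fun s : ℝ => typePay u (x + s • (Pi.single b 1 : (∀ d, A d) → ℝ)) a := by
  simp only [typePay_add]
  fun_prop

lemma cont_meanPay :
    Continuous fun s : ℝ => meanPay u (x + s • (Pi.single b 1 : (∀ d, A d) → ℝ)) := by
  unfold meanPay
  simp only [typePay_add, Pi.add_apply, Pi.smul_apply, smul_eq_mul]
  fun_prop

lemma cont_num (d : D) (t : A d) :
    Continuous fun s : ℝ => (∑ a', if a' d = t
      then (x + s • (Pi.single b 1 : (∀ d, A d) → ℝ)) a'
        * typePay u (x + s • (Pi.single b 1 : (∀ d, A d) → ℝ)) a' else 0) := by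
  apply continuous_finset_sum
  intro a' _
  split
  · simp only [typePay_add, Pi.add_apply, Pi.smul_apply, smul_eq_mul]
    fun_prop
  · exact continuous_const

end helpers

set_option maxHeartbeats 1000000 in
/-- `f₂` satisfies trait combination and trait growth inertia, and
its directional derivative in direction `e_{(a_d, a'_{-d})}` at a state where
`x(a_d) = 0` is `(∏_{d'≠d} x(a_{d'}))·G(u_x(a_d,a'_{-d})/u_x, (u_x(a_{d'})/u_x)_{d'≠d})`. -/
theorem traitImit_combination_and_inertia
    (G : (D → ℝ) → ℝ) (hG : ContDiff ℝ 1 G) (hGpos : ∀ v, 0 < G v)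
    (u : (∀ d, A d) → (∀ d, A d) → ℝ) (hu : ∀ a a', 0 < u a a')
    (x : (∀ d, A d) → ℝ) (hx : ∀ a, 0 ≤ x a) (hsum : ∑ a, x a = 1) :
    (∀ a : ∀ d, A d, 0 < ∏ d, marg x d (a d) → 0 < traitImit G u x a) ∧
    (∀ a : ∀ d, A d, ∀ d : D, marg x d (a d) = 0 → ∀ b : ∀ d, A d,
      deriv (fun s : ℝ => traitImit G u (x + s • (Pi.single b 1 : (∀ d, A d) → ℝ)) a) 0 ≠ 0 →
        (0 < ∏ d' ∈ Finset.univ.erase d, marg x d' (a d')) ∧ b d = a d) ∧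
    (∀ a : ∀ d, A d, ∀ d : D, marg x d (a d) = 0 → ∀ b : ∀ d, A d, b d = a d →
      deriv (fun s : ℝ => traitImit G u (x + s • (Pi.single b 1 : (∀ d, A d) → ℝ)) a) 0 =
        (∏ d' ∈ Finset.univ.erase d, marg x d' (a d')) *
          G (fun d'' => if d'' = d then typePay u x b / meanPay u x
            else traitPay u x d'' (a d'') / meanPay u x)) := by
  have hmp : 0 < meanPay u x := meanPay_pos u x hu hx hsum
  -- main derivative computation
  have key : ∀ a : ∀ d, A d, ∀ d : D, marg x d (a d) = 0 → ∀ b : ∀ d, A d, b d = a d →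
      deriv (fun s : ℝ => traitImit G u (x + s • (Pi.single b 1 : (∀ d, A d) → ℝ)) a) 0 =
        (∏ d' ∈ Finset.univ.erase d, marg x d' (a d')) *
          G (fun d'' => if d'' = d then typePay u x b / meanPay u x
            else traitPay u x d'' (a d'') / meanPay u x) := by
    intro a d hm b hbd
    have hY0 : x + (0:ℝ) • (Pi.single b 1 : (∀ d, A d) → ℝ) = x := by simp
    by_cases hex : ∃ e, marg x e (a e) = 0 ∧ b e ≠ a e
    · -- the flow is identically zero, and the RHS product vanishes
      obtain ⟨e, hme, hbe⟩ := hex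
      have hed : e ≠ d := fun h => hbe (h ▸ hbd)
      have hfz : (fun s : ℝ => traitImit G u (x + s • (Pi.single b 1 : (∀ d, A d) → ℝ)) a)
          = fun _ => 0 := by
        funext s
        unfold traitImit
        have : marg (x + s • (Pi.single b 1 : (∀ d, A d) → ℝ)) e (a e) = 0 := by
          rw [marg_add, hme, if_neg hbe]; ring
        rw [Finset.prod_eq_zero (Finset.mem_univ e) this, zero_mul]
      rw [hfz, deriv_const,
        Finset.prod_eq_zero (Finset.mem_erase.mpr ⟨hed, Finset.mem_univ e⟩) hme, zero_mul]
    · push_neg at hex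
      -- the auxiliary continuous function equal to the slope away from 0
      set h : ℝ → ℝ := fun s =>
        (∏ d' ∈ Finset.univ.erase d,
            (marg x d' (a d') + s * (if b d' = a d' then 1 else 0))) *
          G (fun d'' => (if marg x d'' (a d'') = 0
              then typePay u (x + s • (Pi.single b 1 : (∀ d, A d) → ℝ)) b
              else traitPay u (x + s • (Pi.single b 1 : (∀ d, A d) → ℝ)) d'' (a d''))
            / meanPay u (x + s • (Pi.single b 1 : (∀ d, A d) → ℝ))) with hh
      have hmY0 : meanPay u (x + (0:ℝ) • (Pi.single b 1 : (∀ d, A d) → ℝ)) ≠ 0 := by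
        rw [hY0]; exact hmp.ne'
      have hccoord : ∀ d'' : D, ContinuousAt (fun s : ℝ =>
          (if marg x d'' (a d'') = 0
              then typePay u (x + s • (Pi.single b 1 : (∀ d, A d) → ℝ)) b
              else traitPay u (x + s • (Pi.single b 1 : (∀ d, A d) → ℝ)) d'' (a d''))
            / meanPay u (x + s • (Pi.single b 1 : (∀ d, A d) → ℝ))) 0 := by
        intro d''
        apply ContinuousAt.div _ (cont_meanPay u x b).continuousAt hmY0
        by_cases hz : marg x d'' (a d'') = 0
        · simp only [if_pos hz]
          exact (cont_typePay u x b b).continuousAt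
        · simp only [if_neg hz]
          unfold traitPay
          refine ContinuousAt.div (cont_num u x b d'' (a d'')).continuousAt ?_ ?_
          · have : Continuous fun s : ℝ =>
                marg (x + s • (Pi.single b 1 : (∀ d, A d) → ℝ)) d'' (a d'') := by
              simp only [marg_add]; fun_prop
            exact this.continuousAt
          · rw [hY0]; exact hz
      have hcont : ContinuousAt h 0 := by
        apply ContinuousAt.mul
        · have : Continuous fun s : ℝ => ∏ d' ∈ Finset.univ.erase d,
              (marg x d' (a d') + s * (if b d' = a d' then 1 else 0)) := by
            apply continuous_finset_prod
            intro d' _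
            fun_prop
          exact this.continuousAt
        · exact hG.continuous.continuousAt.comp (continuousAt_pi.mpr hccoord)
      have hf0 : traitImit G u (x + (0:ℝ) • (Pi.single b 1 : (∀ d, A d) → ℝ)) a = 0 := by
        rw [hY0]
        unfold traitImit
        rw [Finset.prod_eq_zero (Finset.mem_univ d) hm, zero_mul]
      have hslope : ∀ s : ℝ, s ≠ 0 →
          slope (fun s : ℝ => traitImit G u (x + s • (Pi.single b 1 : (∀ d, A d) → ℝ)) a) 0 s
            = h s := by
        intro s hs
        have hfs : traitImit G u (x + s • (Pi.single b 1 : (∀ d, A d) → ℝ)) a = s * h s := by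
          unfold traitImit
          rw [← Finset.mul_prod_erase Finset.univ _ (Finset.mem_univ d)]
          have h1 : marg (x + s • (Pi.single b 1 : (∀ d, A d) → ℝ)) d (a d) = s := by
            rw [marg_add, hm, if_pos hbd]; ring
          have h2 : ∀ d' ∈ Finset.univ.erase d,
              marg (x + s • (Pi.single b 1 : (∀ d, A d) → ℝ)) d' (a d')
                = marg x d' (a d') + s * (if b d' = a d' then 1 else 0) := fun d' _ =>
            marg_add x b s d' (a d')
          have h3 : (fun d'' => traitPay u (x + s • (Pi.single b 1 : (∀ d, A d) → ℝ)) d'' (a d'')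
                / meanPay u (x + s • (Pi.single b 1 : (∀ d, A d) → ℝ)))
              = (fun d'' => (if marg x d'' (a d'') = 0
                  then typePay u (x + s • (Pi.single b 1 : (∀ d, A d) → ℝ)) b
                  else traitPay u (x + s • (Pi.single b 1 : (∀ d, A d) → ℝ)) d'' (a d''))
                / meanPay u (x + s • (Pi.single b 1 : (∀ d, A d) → ℝ))) := by
            funext d''
            by_cases hz : marg x d'' (a d'') = 0
            · rw [if_pos hz, traitPay_zero_fiber u x b s hx hz (hex d'' hz) hs]
            · rw [if_neg hz]
          rw [h1, Finset.prod_congr rfl h2, h3, hh]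
          ring
        rw [slope_def_field, hfs, hf0]
        field_simp
        ring
      have hder : HasDerivAt
          (fun s : ℝ => traitImit G u (x + s • (Pi.single b 1 : (∀ d, A d) → ℝ)) a) (h 0) 0 := by
        rw [hasDerivAt_iff_tendsto_slope]
        refine Filter.Tendsto.congr' ?_ (hcont.continuousWithinAt)
        filter_upwards [self_mem_nhdsWithin] with s hs
        exact (hslope s hs).symm
      rw [hder.deriv]
      -- identify h 0 with the stated value
      have hh0 : h 0 = (∏ d' ∈ Finset.univ.erase d, marg x d' (a d')) *
          G (fun d'' => (if marg x d'' (a d'') = 0 then typePay u x b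
              else traitPay u x d'' (a d'')) / meanPay u x) := by
        rw [hh]
        simp only [hY0, zero_mul, add_zero]
      rw [hh0]
      rcases eq_or_ne (∏ d' ∈ Finset.univ.erase d, marg x d' (a d')) 0 with hp | hp
      · rw [hp, zero_mul, zero_mul]
      · congr 1
        congr 1
        funext d''
        rcases eq_or_ne d'' d with rfl | hdd
        · rw [if_pos hm, if_pos rfl]
        · have hz : marg x d'' (a d'') ≠ 0 := by
            intro h0
            exact hp (Finset.prod_eq_zero
              (Finset.mem_erase.mpr ⟨hdd, Finset.mem_univ d''⟩) h0)
          rw [if_neg hz, if_neg hdd]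
  refine ⟨?_, ?_, key⟩
  · intro a hp
    exact mul_pos hp (hGpos _)
  · intro a d hm b hder
    have hbd : b d = a d := by
      by_contra hbd
      apply hder
      have hfz : (fun s : ℝ => traitImit G u (x + s • (Pi.single b 1 : (∀ d, A d) → ℝ)) a)
          = fun _ => 0 := by
        funext s
        unfold traitImit
        have : marg (x + s • (Pi.single b 1 : (∀ d, A d) → ℝ)) d (a d) = 0 := by
          rw [marg_add, hm, if_neg hbd]; ring
        rw [Finset.prod_eq_zero (Finset.mem_univ d) this, zero_mul]
      rw [hfz, deriv_const]
    refine ⟨?_, hbd⟩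
    rw [key a d hm b hbd] at hder
    have hne : (∏ d' ∈ Finset.univ.erase d, marg x d' (a d')) ≠ 0 :=
      fun h0 => hder (by rw [h0, zero_mul])
    exact lt_of_le_of_ne (Finset.prod_nonneg fun d' _ => marg_nonneg x hx d' (a d')) (Ne.symm hne)
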